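/- arXiv:2601.00831 — 2 statements merged into one kernel-verified Lean document; each statement's English description precedes it below -/
import Mathlib

section
/- The prefix-commitment MDP with windowed data is not H-sufficient: there exist two deterministic policies (choosing initial actions L and R respectively) whose induced trajectories have identical collections of observable length-H windows — (τ_L(t), …, τ_L(t+H)) = (τ_R(t), …, τ_R(t+H)) for every window start t with 1 ≤ t and t + H ≤ H+1 — yet whose full-horizon returns differ: G(τ_L) = 1 ≠ 0 = G(τ_R). -/
/-!
Prefix-commitment MDP with windowed offline data: failure of `H`-sufficiency.
-/

/-- States of the prefix-commitment MDP: `Sum.inl t` is the chain state `s_t`,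
`Sum.inr true` is the good terminal `g`, `Sum.inr false` is the bad terminal `b`. -/
abbrev PCState : Type := ℕ ⊕ Bool

/-- Trajectory induced by the initial action `L`. -/
def tauL (H : ℕ) (t : ℕ) : PCState :=
  if t ≤ H + 1 then Sum.inl t else Sum.inr true

/-- Trajectory induced by the initial action `R`. -/
def tauR (H : ℕ) (t : ℕ) : PCState :=
  if t ≤ H + 1 then Sum.inl t else Sum.inr false

/-- Reward sequence under `L`: reward `1` at the final step `H+1`, `0` elsewhere. -/
def rL (H : ℕ) (t : ℕ) : ℝ := if t = H + 1 then 1 else 0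

/-- Reward sequence under `R`: identically `0`. -/
def rR (H : ℕ) (t : ℕ) : ℝ := 0

/-- Full-horizon return: the sum of the rewards over the `H+2` steps. -/
def ret (H : ℕ) (r : ℕ → ℝ) : ℝ := ∑ t ∈ Finset.range (H + 2), r t

/-- Two trajectories induce identical collections of observable length-`H` windows:
the windows with start time `t` satisfying `1 ≤ t` and `t + H ≤ H+1` agree entrywise. -/
def SameWindows (H : ℕ) {S : Type*} (τ τ' : ℕ → S) : Prop :=
  ∀ t, 1 ≤ t → t + H ≤ H + 1 → ∀ i, i ≤ H → τ (t + i) = τ' (t + i)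

/-- An offline problem, given as a family of policies `p` with induced trajectories
`traj p` and reward sequences `rew p`, is `H`-sufficient if any two policies inducing
identical collections of observable length-`H` windows have equal full-horizon returns. -/
def HSufficient (H : ℕ) {S : Type*} {P : Type*}
    (traj : P → ℕ → S) (rew : P → ℕ → ℝ) : Prop :=
  ∀ p q : P, SameWindows H (traj p) (traj q) → ret H (rew p) = ret H (rew q)

/-!
Every observable window starts at time `t ≥ 1` and ends by time `H + 1`, so it lies inside the
chain `s_1, …, s_{H+1}` shared by both trajectories; they differ only at time `H + 2`, which no
window reaches, yet the transition into that state carries the whole reward.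
-/

theorem sameWindows_of_eqOn {H : ℕ} {S : Type*} {τ τ' : ℕ → S}
    (h : Set.EqOn τ τ' (Set.Icc 1 (H + 1))) : SameWindows H τ τ' :=
  fun t ht htH i hi => h ⟨by omega, by omega⟩

theorem not_hSufficient_of_sameWindows_of_ret_ne {H : ℕ} {S P : Type*}
    {traj : P → ℕ → S} {rew : P → ℕ → ℝ} {p q : P}
    (hw : SameWindows H (traj p) (traj q)) (hr : ret H (rew p) ≠ ret H (rew q)) :
    ¬ HSufficient H traj rew :=
  fun hs => hr (hs p q hw)

theorem tauL_eq_tauR_of_le {H t : ℕ} (ht : t ≤ H + 1) : tauL H t = tauR H t := by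
  simp only [tauL, tauR, if_pos ht]

theorem sameWindows_tauL_tauR (H : ℕ) : SameWindows H (tauL H) (tauR H) :=
  sameWindows_of_eqOn fun _ ht => tauL_eq_tauR_of_le ht.2

theorem ret_rL (H : ℕ) : ret H (rL H) = 1 := by
  simp [ret, rL, Finset.sum_ite_eq']

theorem ret_rR (H : ℕ) : ret H (rR H) = 0 := by
  simp [ret, rR]

theorem prefix_not_H_sufficient_general (H : ℕ) :
    SameWindows H (tauL H) (tauR H) ∧
    ret H (rL H) = 1 ∧ ret H (rR H) = 0 ∧ ret H (rL H) ≠ ret H (rR H) ∧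
    ¬ HSufficient H (fun p : Bool => if p then tauL H else tauR H)
        (fun p : Bool => if p then rL H else rR H) := by
  have hret : ret H (rL H) ≠ ret H (rR H) := by
    rw [ret_rL, ret_rR]
    exact one_ne_zero
  exact ⟨sameWindows_tauL_tauR H, ret_rL H, ret_rR H, hret,
    not_hSufficient_of_sameWindows_of_ret_ne (p := true) (q := false)
      (sameWindows_tauL_tauR H) hret⟩

/-- The prefix-commitment MDP with windowed data is not
`H`-sufficient: the two deterministic policies choosing initial actions `L` and `R`
(indexed by `Bool`, `true ↦ L`) induce identical collections of observable
length-`H` windows, yet their full-horizon returns differ: `G(τ_L) = 1 ≠ 0 = G(τ_R)`. -/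
theorem prefix_not_H_sufficient (H : ℕ) (hH : 1 ≤ H) :
    SameWindows H (tauL H) (tauR H) ∧
    ret H (rL H) = 1 ∧ ret H (rR H) = 0 ∧ ret H (rL H) ≠ ret H (rR H) ∧
    ¬ HSufficient H (fun p : Bool => if p then tauL H else tauR H)
        (fun p : Bool => if p then rL H else rR H) :=
  prefix_not_H_sufficient_general H
end

section
/- In the short-segment MDP with M > H+1, the truncated and true objectives induce opposite orderings on the all-greedy and all-patient policies: J_H(a_greedy) = H+1 > 0 = J_H(a_patient), while J(a_greedy) = (H+1) − M < 0 = J(a_patient). Hence optimizing the truncated objective J_H does not yield the same policy ordering as optimizing the full-horizon objective J. -/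
/-- Truncated return: the number of greedy steps (`true` = greedy, `false` = patient). -/
def JH (H : ℕ) (a : Fin (H + 1) → Bool) : ℝ :=
  ((Finset.univ.filter fun t => a t = true).card : ℝ)

/-- True (full-horizon) return: `J(a) = J_H(a) − M` if some greedy action is
taken, and `J(a) = 0` otherwise. -/
def J (H : ℕ) (M : ℝ) (a : Fin (H + 1) → Bool) : ℝ :=
  if ∃ t, a t = true then JH H a - M else 0

theorem JH_const_true (H : ℕ) : JH H (fun _ => true) = H + 1 := by
  simp [JH]

theorem JH_const_false (H : ℕ) : JH H (fun _ => false) = 0 := by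
  simp [JH]

section

variable {H : ℕ} {M : ℝ} {a : Fin (H + 1) → Bool}

theorem J_of_exists_greedy (h : ∃ t, a t = true) : J H M a = JH H a - M :=
  if_pos h

theorem J_of_forall_patient (h : ∀ t, a t = false) : J H M a = 0 :=
  if_neg (by simpa using h)

end

theorem J_const_true (H : ℕ) (M : ℝ) : J H M (fun _ => true) = H + 1 - M := by
  rw [J_of_exists_greedy ⟨0, rfl⟩, JH_const_true]

theorem J_const_false (H : ℕ) (M : ℝ) : J H M (fun _ => false) = 0 :=
  J_of_forall_patient fun _ => rfl

/-- With `M > H+1`: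
`J_H(a_greedy) = H+1 > 0 = J_H(a_patient)` while
`J(a_greedy) = (H+1) − M < 0 = J(a_patient)`.  Hence optimizing the truncated
objective `J_H` does not yield the same policy ordering as optimizing the
full-horizon objective `J`. -/
theorem opposite_orderings (H : ℕ) (M : ℝ) (hM : M > H + 1) :
    JH H (fun _ => true) = H + 1 ∧
    JH H (fun _ => false) = 0 ∧
    JH H (fun _ => false) < JH H (fun _ => true) ∧
    J H M (fun _ => true) = (H + 1) - M ∧
    J H M (fun _ => false) = 0 ∧
    J H M (fun _ => true) < J H M (fun _ => false) := by
  refine ⟨JH_const_true H, JH_const_false H, ?_, J_const_true H M, J_const_false H M, ?_⟩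
  · rw [JH_const_true, JH_const_false]
    positivity
  · rw [J_const_true, J_const_false]
    linarith
end
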